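/- arXiv:1204.6064 — 3 statements merged into one kernel-verified Lean document; each statement's English description precedes it below -/
import Mathlib

section
/- For all x, y, x₀, y₀, z, z₀ ∈ ℝ with (x,y) ≠ (x₀,y₀), one has 1/‖(x,y,z)-(x₀,y₀,z₀)‖ = (2/π) ∫₀^∞ K₀(k√((x-x₀)²+(y-y₀)²)) cos(k(z-z₀)) dk (the Lipschitz–Hankel integral). -/
open MeasureTheory Set Real Filter Topology

/-- Modified Bessel function of the second kind of order zero. -/
noncomputable def K0 (x : ℝ) : ℝ := ∫ t in Set.Ioi (0:ℝ), Real.exp (-(x * Real.cosh t))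

lemma my_cosh_ge (t : ℝ) : 1 + t^2/2 ≤ Real.cosh t := by
  have h1 : Real.cosh t = 2 * Real.sinh (t/2)^2 + 1 := by
    have := Real.cosh_two_mul (t/2)
    rw [Real.cosh_sq] at this
    have h2 : 2 * (t/2) = t := by ring
    rw [h2] at this; linarith
  have h2 : (t/2)^2 ≤ Real.sinh (t/2)^2 := by
    rcases le_or_gt 0 (t/2) with h | h
    · have h3 := (Real.self_le_sinh_iff).2 h
      nlinarith
    · have h' : Real.sinh (t/2) ≤ t/2 := by
        have := (Real.self_le_sinh_iff (x := -(t/2))).2 (by linarith)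
        rw [Real.sinh_neg] at this; linarith
      nlinarith
  nlinarith

lemma my_le_cosh (t : ℝ) (ht : 0 ≤ t) : t ≤ Real.cosh t := by
  have h1 := (Real.self_le_sinh_iff).2 ht
  have h2 : Real.cosh t - Real.sinh t = Real.exp (-t) := Real.cosh_sub_sinh t
  have := Real.exp_pos (-t)
  linarith

lemma my_exp_le_cosh (t : ℝ) : Real.exp t / 2 ≤ Real.cosh t := by
  rw [Real.cosh_eq]
  have := Real.exp_pos (-t)
  linarith

lemma aux_exp_cos_integrable {c : ℝ} (b : ℝ) (hc : 0 < c) :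
    IntegrableOn (fun k => Real.exp (-(c*k)) * Real.cos (k*b)) (Ioi (0:ℝ)) := by
  have hbase : IntegrableOn (fun k : ℝ => Real.exp (-c*k)) (Ioi (0:ℝ)) :=
    exp_neg_integrableOn_Ioi 0 hc
  refine hbase.integrable.mono' ?_ ?_
  · exact (Continuous.mul (by fun_prop) (by fun_prop)).aestronglyMeasurable
  · filter_upwards with k
    rw [norm_mul, Real.norm_eq_abs, Real.norm_eq_abs, Real.abs_exp, neg_mul]
    calc Real.exp (-(c*k)) * |Real.cos (k*b)| ≤ Real.exp (-(c*k)) * 1 :=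
          mul_le_mul_of_nonneg_left (Real.abs_cos_le_one _) (Real.exp_pos _).le
      _ = Real.exp (-(c*k)) := mul_one _

lemma aux_exp_cos_integral {c : ℝ} (b : ℝ) (hc : 0 < c) :
    ∫ k in Ioi (0:ℝ), Real.exp (-(c*k)) * Real.cos (k*b) = c/(c^2+b^2) := by
  have hne : c^2 + b^2 ≠ 0 := by positivity
  set F : ℝ → ℝ := fun k =>
    Real.exp (-(c*k)) * (b * Real.sin (k*b) - c * Real.cos (k*b)) / (c^2+b^2) with hF
  have hderiv : ∀ k ∈ Ici (0:ℝ), HasDerivAt F (Real.exp (-(c*k)) * Real.cos (k*b)) k := by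
    intro k _
    have he : HasDerivAt (fun k : ℝ => Real.exp (-(c*k))) (Real.exp (-(c*k)) * (-c)) k := by
      have h1 : HasDerivAt (fun k : ℝ => -(c*k)) (-c) k := by
        simpa using ((hasDerivAt_id k).const_mul (-c))
      simpa using h1.exp
    have hkb : HasDerivAt (fun k : ℝ => k * b) b k := hasDerivAt_mul_const b
    have hs : HasDerivAt (fun k : ℝ => b * Real.sin (k*b) - c * Real.cos (k*b))
        (b * (Real.cos (k*b) * b) - c * (-Real.sin (k*b) * b)) k :=
      ((hkb.sin).const_mul b).sub ((hkb.cos).const_mul c)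
    have := (he.mul hs).div_const (c^2+b^2)
    refine HasDerivAt.congr_deriv this ?_
    field_simp
    ring
  have hbound : ∀ k : ℝ, ‖F k‖ ≤ Real.exp (-(c*k)) * (|b| + c) / (c^2+b^2) := by
    intro k
    rw [hF]
    rw [Real.norm_eq_abs, abs_div, abs_of_pos (by positivity : (0:ℝ) < c^2+b^2), abs_mul,
      Real.abs_exp]
    apply div_le_div_of_nonneg_right ?_ (by positivity)
    apply mul_le_mul_of_nonneg_left ?_ (Real.exp_pos _).le
    calc |b * Real.sin (k*b) - c * Real.cos (k*b)|
        ≤ |b * Real.sin (k*b)| + |c * Real.cos (k*b)| := abs_sub _ _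
      _ ≤ |b| * 1 + c * 1 := by
          rw [abs_mul, abs_mul, abs_of_pos hc]
          gcongr
          · exact Real.abs_sin_le_one _
          · exact Real.abs_cos_le_one _
      _ = |b| + c := by ring
  have hg : Tendsto (fun k : ℝ => Real.exp (-(c*k)) * (|b| + c) / (c^2+b^2)) atTop (𝓝 0) := by
    have h1 : Tendsto (fun k : ℝ => Real.exp (-(c*k))) atTop (𝓝 0) := by
      have : Tendsto (fun k : ℝ => c * k) atTop atTop :=
        tendsto_id.const_mul_atTop hc
      exact Real.tendsto_exp_neg_atTop_nhds_zero.comp this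
    have := (h1.mul_const (|b| + c)).div_const (c^2+b^2)
    simpa using this
  have htend : Tendsto F atTop (𝓝 0) := squeeze_zero_norm hbound hg
  have key := integral_Ioi_of_hasDerivAt_of_tendsto' hderiv (aux_exp_cos_integrable b hc) htend
  rw [key, hF]
  simp only [mul_zero, zero_mul, Real.sin_zero, Real.cos_zero, Real.exp_zero]
  field_simp
  simp

lemma aux_cosh_integrable {a : ℝ} (b : ℝ) (ha : 0 < a) :
    IntegrableOn (fun t => (a * Real.cosh t)/((a*Real.cosh t)^2 + b^2)) (Ioi (0:ℝ)) := by
  have hbase : IntegrableOn (fun t : ℝ => Real.exp (-1*t)) (Ioi (0:ℝ)) :=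
    exp_neg_integrableOn_Ioi 0 one_pos
  refine ((hbase.integrable.const_mul (2/a))).mono' ?_ ?_
  · apply Continuous.aestronglyMeasurable
    apply Continuous.div (by fun_prop) (by fun_prop)
    intro t
    have := Real.cosh_pos (x := t)
    positivity
  · filter_upwards with t
    have hc := Real.cosh_pos (x := t)
    have hac : 0 < a * Real.cosh t := by positivity
    rw [Real.norm_eq_abs, abs_of_pos (by positivity)]
    have h1 : (a * Real.cosh t)/((a*Real.cosh t)^2 + b^2) ≤ 1/(a * Real.cosh t) := by
      rw [div_le_div_iff₀ (by positivity) hac]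
      nlinarith
    have h2 : 1/(a * Real.cosh t) ≤ 2/a * Real.exp (-1*t) := by
      have h3 := my_exp_le_cosh t
      have h4 : 0 < Real.exp t := Real.exp_pos t
      rw [div_le_iff₀ hac]
      have h5 : 2/a * Real.exp (-1*t) * (a*Real.cosh t) = 2*Real.cosh t/Real.exp t := by
        rw [neg_one_mul, Real.exp_neg]; field_simp
      rw [h5, le_div_iff₀ h4]
      nlinarith
    linarith

lemma aux_cosh_integral {a : ℝ} (b : ℝ) (ha : 0 < a) :
    ∫ t in Ioi (0:ℝ), (a * Real.cosh t)/((a*Real.cosh t)^2 + b^2)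
      = Real.pi/(2 * Real.sqrt (a^2+b^2)) := by
  set s : ℝ := Real.sqrt (a^2+b^2) with hs
  have hs0 : 0 < s := Real.sqrt_pos.2 (by positivity)
  have hs2 : s^2 = a^2 + b^2 := Real.sq_sqrt (by positivity)
  set G : ℝ → ℝ := fun t => Real.arctan (a * Real.sinh t / s) / s with hG
  have hderiv : ∀ t ∈ Ici (0:ℝ),
      HasDerivAt G ((a * Real.cosh t)/((a*Real.cosh t)^2 + b^2)) t := by
    intro t _
    have hin : HasDerivAt (fun t : ℝ => a * Real.sinh t / s) (a * Real.cosh t / s) t :=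
      ((Real.hasDerivAt_sinh t).const_mul a).div_const s
    have := (hin.arctan).div_const s
    refine HasDerivAt.congr_deriv this ?_
    have hc := Real.cosh_pos (x := t)
    have hd : (a*Real.cosh t)^2 + b^2 = a^2 * Real.sinh t ^2 + s^2 := by
      rw [hs2]; rw [mul_pow, Real.cosh_sq]; ring
    rw [hd]
    field_simp
    ring
  have htend : Tendsto G atTop (𝓝 ((Real.pi/2)/s)) := by
    have hsinh : Tendsto (fun t : ℝ => a * Real.sinh t / s) atTop atTop := by
      apply Tendsto.atTop_div_const hs0
      apply Tendsto.const_mul_atTop ha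
      apply tendsto_atTop_mono' _ _ tendsto_id
      filter_upwards [eventually_ge_atTop (0:ℝ)] with t ht
      exact Real.self_le_sinh_iff.2 ht
    have := (tendsto_nhds_of_tendsto_nhdsWithin Real.tendsto_arctan_atTop).comp hsinh
    exact this.div_const s
  have key := integral_Ioi_of_hasDerivAt_of_tendsto' hderiv (aux_cosh_integrable b ha) htend
  rw [key, hG]
  simp only [Real.sinh_zero, mul_zero, zero_div, Real.arctan_zero]
  ring

lemma aux_prod_integrable {a : ℝ} (b : ℝ) (ha : 0 < a) :
    Integrable (Function.uncurry fun k t : ℝ =>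
        Real.exp (-(k * a * Real.cosh t)) * Real.cos (k*b))
      ((volume.restrict (Ioi 0)).prod (volume.restrict (Ioi 0))) := by
  have hcont : Continuous (Function.uncurry fun k t : ℝ =>
      Real.exp (-(k * a * Real.cosh t)) * Real.cos (k*b)) := by fun_prop
  have h1f := hcont.aestronglyMeasurable (μ :=
    ((volume.restrict (Ioi (0:ℝ))).prod (volume.restrict (Ioi (0:ℝ)))))
  rw [integrable_prod_iff h1f]
  constructor
  · rw [ae_restrict_iff' measurableSet_Ioi]
    filter_upwards with k hk
    have hk' : (0:ℝ) < k := hk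
    have hka : 0 < k * a := by positivity
    refine (exp_neg_integrableOn_Ioi 0 hka).integrable.mono' ?_ ?_
    · exact (Continuous.aestronglyMeasurable (by fun_prop))
    · filter_upwards [ae_restrict_mem measurableSet_Ioi] with t ht
      simp only [Function.uncurry_apply_pair]
      rw [norm_mul, Real.norm_eq_abs, Real.norm_eq_abs, Real.abs_exp]
      have h1 : |Real.cos (k*b)| ≤ 1 := Real.abs_cos_le_one _
      have h2 : Real.exp (-(k * a * Real.cosh t)) ≤ Real.exp (-(k*a) * t) := by
        apply Real.exp_le_exp.2
        have := my_le_cosh t (le_of_lt ht)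
        nlinarith
      calc Real.exp (-(k * a * Real.cosh t)) * |Real.cos (k*b)|
          ≤ Real.exp (-(k * a * Real.cosh t)) * 1 := by gcongr
        _ ≤ Real.exp (-(k*a) * t) := by rw [mul_one]; exact h2
  · set g : ℝ → ℝ := fun k =>
      Real.exp (-(a*k)) * (a*k) ^ ((1/2:ℝ)-1) * (Real.sqrt (2*Real.pi) / 2) with hg
    have hgint : IntegrableOn g (Ioi (0:ℝ)) := by
      have hgamma := Real.GammaIntegral_convergent (s := 1/2) (by norm_num)
      have hsc := (integrableOn_Ioi_comp_mul_left_iff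
        (fun x : ℝ => Real.exp (-x) * x ^ ((1/2:ℝ)-1)) 0 ha).2
      simp only [mul_zero] at hsc
      exact (hsc hgamma).mul_const _
    refine hgint.integrable.mono' (h1f.norm.integral_prod_right') ?_
    filter_upwards [ae_restrict_mem measurableSet_Ioi] with k hk
    have hk' : (0:ℝ) < k := hk
    have hka : 0 < k * a := by positivity
    have step1 : (∫ t in Ioi (0:ℝ),
        ‖Real.exp (-(k * a * Real.cosh t)) * Real.cos (k*b)‖)
        ≤ ∫ t in Ioi (0:ℝ), Real.exp (-(k*a)) * Real.exp (-(k*a/2) * t^2) := by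
      apply integral_mono_of_nonneg
      · filter_upwards with t; positivity
      · exact ((integrable_exp_neg_mul_sq (by positivity : (0:ℝ) < k*a/2)).integrableOn).const_mul _
      · filter_upwards with t
        rw [norm_mul, Real.norm_eq_abs, Real.norm_eq_abs, Real.abs_exp, ← Real.exp_add]
        calc Real.exp (-(k * a * Real.cosh t)) * |Real.cos (k*b)|
            ≤ Real.exp (-(k * a * Real.cosh t)) * 1 := by
              gcongr; exact Real.abs_cos_le_one _
          _ = Real.exp (-(k * a * Real.cosh t)) := mul_one _
          _ ≤ Real.exp (-(k*a) + -(k*a/2) * t^2) := by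
              apply Real.exp_le_exp.2
              have := my_cosh_ge t
              nlinarith
    have step2 : (∫ t in Ioi (0:ℝ), Real.exp (-(k*a)) * Real.exp (-(k*a/2) * t^2)) = g k := by
      rw [MeasureTheory.integral_const_mul, integral_gaussian_Ioi]
      rw [hg]
      have h1 : ((1:ℝ)/2) - 1 = -(1/2) := by norm_num
      have h2 : (a*k) ^ (-(1/2):ℝ) = (Real.sqrt (a*k))⁻¹ := by
        rw [Real.rpow_neg (by positivity), ← Real.sqrt_eq_rpow]
      simp only [h1, h2]
      have h3 : Real.sqrt (Real.pi / (k*a/2)) = Real.sqrt (2*Real.pi) / Real.sqrt (a*k) := by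
        rw [← Real.sqrt_div (by positivity)]
        congr 1
        field_simp
      rw [h3]
      have h4 : Real.sqrt (a*k) ≠ 0 := by positivity
      field_simp
    have hnn : (0:ℝ) ≤ ∫ t in Ioi (0:ℝ),
        ‖Real.exp (-(k * a * Real.cosh t)) * Real.cos (k*b)‖ :=
      integral_nonneg (fun t => norm_nonneg _)
    simp only [Function.uncurry_apply_pair]
    rw [Real.norm_eq_abs, abs_of_nonneg hnn]
    calc _ ≤ _ := step1
      _ = g k := step2

theorem lipschitz_hankel_integral (x y z x₀ y₀ z₀ : ℝ)
    (h : (x, y) ≠ (x₀, y₀)) :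
    1 / Real.sqrt ((x - x₀)^2 + (y - y₀)^2 + (z - z₀)^2)
      = (2 / Real.pi) * ∫ k in Set.Ioi (0:ℝ),
          K0 (k * Real.sqrt ((x - x₀)^2 + (y - y₀)^2)) * Real.cos (k * (z - z₀)) := by
  have hX : 0 < (x-x₀)^2 + (y-y₀)^2 := by
    rw [Ne, Prod.mk.injEq, not_and_or] at h
    rcases h with h | h
    · have hx : x - x₀ ≠ 0 := sub_ne_zero.2 h
      positivity
    · have hy : y - y₀ ≠ 0 := sub_ne_zero.2 h
      positivity
  set a : ℝ := Real.sqrt ((x-x₀)^2+(y-y₀)^2) with hadef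
  set b : ℝ := z - z₀ with hbdef
  have ha : 0 < a := Real.sqrt_pos.2 hX
  have ha2 : a^2 = (x-x₀)^2+(y-y₀)^2 := Real.sq_sqrt hX.le
  have step0 : ∀ k : ℝ, K0 (k * a) * Real.cos (k*b)
      = ∫ t in Ioi (0:ℝ), Real.exp (-(k * a * Real.cosh t)) * Real.cos (k*b) := by
    intro k
    rw [K0]
    exact (MeasureTheory.integral_mul_const _ _).symm
  have swap := MeasureTheory.integral_integral_swap (aux_prod_integrable b ha)
  have inner : ∀ t : ℝ,
      (∫ k in Ioi (0:ℝ), Real.exp (-(k * a * Real.cosh t)) * Real.cos (k*b))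
      = (a * Real.cosh t)/((a * Real.cosh t)^2 + b^2) := by
    intro t
    have hc : 0 < a * Real.cosh t := mul_pos ha (Real.cosh_pos t)
    have hkey := aux_exp_cos_integral b hc
    rw [← hkey]
    congr 1
    funext k
    rw [show a * Real.cosh t * k = k * a * Real.cosh t from by ring]
  have main : (∫ k in Ioi (0:ℝ), K0 (k * a) * Real.cos (k*b))
      = Real.pi/(2 * Real.sqrt (a^2+b^2)) := by
    calc (∫ k in Ioi (0:ℝ), K0 (k * a) * Real.cos (k*b))
        = ∫ k in Ioi (0:ℝ), ∫ t in Ioi (0:ℝ),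
            Real.exp (-(k * a * Real.cosh t)) * Real.cos (k*b) := by
          simp only [step0]
      _ = ∫ t in Ioi (0:ℝ), ∫ k in Ioi (0:ℝ),
            Real.exp (-(k * a * Real.cosh t)) * Real.cos (k*b) := swap
      _ = ∫ t in Ioi (0:ℝ), (a * Real.cosh t)/((a * Real.cosh t)^2 + b^2) := by
          simp only [inner]
      _ = Real.pi/(2 * Real.sqrt (a^2+b^2)) := aux_cosh_integral b ha
  rw [main]
  have hs0 : (0:ℝ) < Real.sqrt (a^2+b^2) := Real.sqrt_pos.2 (by positivity)
  rw [show (x-x₀)^2 + (y-y₀)^2 + b^2 = a^2 + b^2 from by rw [ha2]]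
  have hpi := Real.pi_ne_zero
  field_simp
end

section
/- The Wronskian of the two solutions η ↦ e^{-η²/2} H_{-n-1}(η) and η ↦ e^{η²/2} H_n(iη) of the equation u'' − (2n+1+η²)u = 0 is constant and equal to iⁿ, for every n ∈ ℕ₀. -/
open Complex

/-- Kummer's confluent hypergeometric function of the first kind. -/
noncomputable def kummerM (a b z : ℂ) : ℂ :=
  ∑' n : ℕ, ((ascPochhammer ℂ n).eval a / (ascPochhammer ℂ n).eval b) * z^n / (n.factorial : ℂ)

/-- The Hermite function `H_ν`. -/
noncomputable def hermiteFn (ν z : ℂ) : ℂ :=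
  (2:ℂ)^ν * (Real.sqrt Real.pi : ℂ) / Complex.Gamma ((1 - ν)/2) * kummerM (-ν/2) (1/2) (z^2)
    - (2:ℂ)^(ν + 1) * (Real.sqrt Real.pi : ℂ) / Complex.Gamma (-ν/2)
        * z * kummerM ((1 - ν)/2) (3/2) (z^2)


noncomputable def kT (a b : ℂ) (n : ℕ) : ℂ :=
  (ascPochhammer ℂ n).eval a / (ascPochhammer ℂ n).eval b / (n.factorial : ℂ)

lemma kT_zero (a b : ℂ) : kT a b 0 = 1 := by simp [kT]

lemma ascEval_ne (b : ℂ) (hb : ∀ k : ℕ, b + (k:ℂ) ≠ 0) (n : ℕ) :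
    (ascPochhammer ℂ n).eval b ≠ 0 := by
  induction n with
  | zero => simp
  | succ m ih =>
    rw [ascPochhammer_succ_right]
    simp only [Polynomial.eval_mul, Polynomial.eval_add, Polynomial.eval_X,
      Polynomial.eval_natCast]
    exact mul_ne_zero ih (hb m)

lemma hb_succ (b : ℂ) (hb : ∀ k : ℕ, b + (k:ℂ) ≠ 0) : ∀ k : ℕ, (b+1) + (k:ℂ) ≠ 0 := by
  intro k h
  have := hb (k+1)
  push_cast at this
  exact this (by linear_combination h)

lemma kT_succ (a b : ℂ) (hb : ∀ k : ℕ, b + (k:ℂ) ≠ 0) (n : ℕ) :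
    ((n:ℂ)+1) * ((n:ℂ)+b) * kT a b (n+1) = ((n:ℂ)+a) * kT a b n := by
  have hB := ascEval_ne b hb n
  have hf : ((n.factorial :ℕ):ℂ) ≠ 0 := Nat.cast_ne_zero.2 n.factorial_ne_zero
  have hn1 : ((n:ℂ)+1) ≠ 0 := by have h := Nat.cast_ne_zero (R := ℂ).2 (Nat.succ_ne_zero n); push_cast at h; exact h
  have hbn : b + (n:ℂ) ≠ 0 := hb n
  unfold kT
  rw [ascPochhammer_succ_right]
  simp only [Polynomial.eval_mul, Polynomial.eval_add, Polynomial.eval_X,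
    Polynomial.eval_natCast, Nat.factorial_succ, Nat.cast_mul]
  have hD1 : (ascPochhammer ℂ n).eval b * (b + (n:ℂ)) * (((n:ℕ)+1 :ℂ) * (n.factorial:ℂ)) ≠ 0 := by
    push_cast
    exact mul_ne_zero (mul_ne_zero hB hbn) (mul_ne_zero hn1 hf)
  have hD2 : (ascPochhammer ℂ n).eval b * (n.factorial:ℂ) ≠ 0 := mul_ne_zero hB hf
  push_cast
  simp only [div_div, ← mul_div_assoc]
  rw [div_eq_div_iff hD1 hD2]
  push_cast
  ring

lemma kT_shift (a b : ℂ) (hb : ∀ k : ℕ, b + (k:ℂ) ≠ 0) (n : ℕ) :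
    ((n:ℂ)+1) * kT a b (n+1) = (a/b) * kT (a+1) (b+1) n := by
  have hB : (ascPochhammer ℂ n).eval (b+1) ≠ 0 := ascEval_ne _ (hb_succ b hb) n
  have hb0 : b ≠ 0 := by simpa using hb 0
  have hf : ((n.factorial :ℕ):ℂ) ≠ 0 := Nat.cast_ne_zero.2 n.factorial_ne_zero
  have hn1 : ((n:ℂ)+1) ≠ 0 := by have h := Nat.cast_ne_zero (R := ℂ).2 (Nat.succ_ne_zero n); push_cast at h; exact h
  unfold kT
  rw [ascPochhammer_succ_left]
  simp only [Polynomial.eval_mul, Polynomial.eval_X, Polynomial.eval_comp,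
    Polynomial.eval_add, Polynomial.eval_one, Nat.factorial_succ, Nat.cast_mul]
  have hD1 : b * (ascPochhammer ℂ n).eval (b+1) * (((n:ℕ)+1:ℂ) * (n.factorial:ℂ)) ≠ 0 := by
    push_cast
    exact mul_ne_zero (mul_ne_zero hb0 hB) (mul_ne_zero hn1 hf)
  have hD2 : b * ((ascPochhammer ℂ n).eval (b+1) * (n.factorial:ℂ)) ≠ 0 :=
    mul_ne_zero hb0 (mul_ne_zero hB hf)
  push_cast
  simp only [div_div, ← mul_div_assoc, div_mul_eq_mul_div]
  rw [div_eq_div_iff hD1 hD2]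
  push_cast
  ring

lemma summable_kT (a b : ℂ) (hb : ∀ k : ℕ, b + (k:ℂ) ≠ 0) (R : ℝ) (hR : 0 ≤ R) :
    Summable (fun n : ℕ => ((n:ℝ)+1) * ‖kT a b n‖ * R^n) := by
  apply summable_of_ratio_norm_eventually_le (r := 1/2) (by norm_num)
  have hev : ∀ᶠ n : ℕ in Filter.atTop,
      (2*‖b‖ ≤ (n:ℝ)) ∧ (‖a‖ ≤ (n:ℝ)) ∧ (16*R ≤ (n:ℝ)+1) ∧ (1 ≤ (n:ℝ)) := by
    have h1 := Filter.eventually_ge_atTop (⌈2*‖b‖⌉₊)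
    have h2 := Filter.eventually_ge_atTop (⌈‖a‖⌉₊)
    have h3 := Filter.eventually_ge_atTop (⌈16*R⌉₊)
    have h4 := Filter.eventually_ge_atTop 1
    filter_upwards [h1, h2, h3, h4] with n g1 g2 g3 g4
    have c1 : ((⌈2*‖b‖⌉₊:ℕ):ℝ) ≤ (n:ℝ) := by exact_mod_cast g1
    have c2 : ((⌈‖a‖⌉₊:ℕ):ℝ) ≤ (n:ℝ) := by exact_mod_cast g2
    have c3 : ((⌈16*R⌉₊:ℕ):ℝ) ≤ (n:ℝ) := by exact_mod_cast g3
    have c4 : (1:ℝ) ≤ (n:ℝ) := by exact_mod_cast g4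
    exact ⟨le_trans (Nat.le_ceil _) c1, le_trans (Nat.le_ceil _) c2,
      by have := le_trans (Nat.le_ceil _) c3; linarith, c4⟩
  filter_upwards [hev] with n hn
  obtain ⟨hbn, han, hRn, h1n⟩ := hn
  set K := ‖kT a b n‖ with hK
  set K' := ‖kT a b (n+1)‖ with hK'
  have hKnn : 0 ≤ K := norm_nonneg _
  have hK'nn : 0 ≤ K' := norm_nonneg _
  have hPnn : (0:ℝ) ≤ R^n := pow_nonneg hR n
  have hrec := congrArg norm (kT_succ a b hb n)
  simp only [norm_mul] at hrec
  have hn1 : ‖(n:ℂ)+1‖ = (n:ℝ)+1 := by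
    rw [show (n:ℂ)+1 = ((n+1:ℕ):ℂ) by push_cast; ring, Complex.norm_natCast]
    push_cast; ring
  rw [hn1] at hrec
  have hnb : (n:ℝ)/2 ≤ ‖(n:ℂ)+b‖ := by
    have h := norm_add_le ((n:ℂ)+b) (-b)
    simp only [add_neg_cancel_right, norm_neg, Complex.norm_natCast] at h
    linarith
  have hna : ‖(n:ℂ)+a‖ ≤ 2*(n:ℝ) := by
    have h := norm_add_le ((n:ℂ)) a
    rw [Complex.norm_natCast] at h
    linarith
  have hb5 : K' * (((n:ℝ)+1)*((n:ℝ)/2)) ≤ K * (2*(n:ℝ)) := by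
    calc K' * (((n:ℝ)+1)*((n:ℝ)/2)) ≤ K' * (((n:ℝ)+1)*‖(n:ℂ)+b‖) := by
          apply mul_le_mul_of_nonneg_left _ hK'nn
          apply mul_le_mul_of_nonneg_left hnb (by linarith)
      _ = ‖(n:ℂ)+a‖ * K := by rw [← hrec]; ring
      _ ≤ (2*(n:ℝ)) * K := mul_le_mul_of_nonneg_right hna hKnn
      _ = K * (2*(n:ℝ)) := by ring
  have h6 : K' * ((n:ℝ)+1) ≤ 4*K := by nlinarith [hb5]
  have goal1 : ((n:ℝ)+2)*K' ≤ 8*K := by nlinarith [h6]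
  rw [Real.norm_of_nonneg (by positivity), Real.norm_of_nonneg (by positivity)]
  have key : (((n:ℝ)+1)+1) * K' * R^(n+1) ≤ (8*K) * (R * R^n) := by
    rw [pow_succ]
    calc (((n:ℝ)+1)+1) * K' * (R^n * R) = (((n:ℝ)+2)*K') * (R^n*R) := by ring
      _ ≤ (8*K) * (R^n*R) := mul_le_mul_of_nonneg_right goal1 (by positivity)
      _ = (8*K) * (R*R^n) := by ring
  have h7 : 16*R*(K*R^n) ≤ ((n:ℝ)+1)*(K*R^n) :=
    mul_le_mul_of_nonneg_right hRn (mul_nonneg hKnn hPnn)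
  push_cast
  linarith [key, h7]

lemma kummerM_eq (a b z : ℂ) : kummerM a b z = ∑' n : ℕ, kT a b n * z^n := by
  unfold kummerM kT
  congr 1
  ext n
  ring

lemma summable_term (a b : ℂ) (hb : ∀ k : ℕ, b + (k:ℂ) ≠ 0) (z : ℂ) :
    Summable (fun n : ℕ => kT a b n * z^n) := by
  apply Summable.of_norm
  refine Summable.of_nonneg_of_le (fun n => norm_nonneg _) ?_
    (summable_kT a b hb ‖z‖ (norm_nonneg z))
  · intro n
    rw [norm_mul, norm_pow]
    have h1 : (1:ℝ) ≤ (n:ℝ)+1 := by have := Nat.cast_nonneg (α:=ℝ) n; linarith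
    nlinarith [norm_nonneg (kT a b n), pow_nonneg (norm_nonneg z) n,
      mul_nonneg (norm_nonneg (kT a b n)) (pow_nonneg (norm_nonneg z) n)]

lemma hasSum_kummerM (a b : ℂ) (hb : ∀ k : ℕ, b + (k:ℂ) ≠ 0) (z : ℂ) :
    HasSum (fun n : ℕ => kT a b n * z^n) (kummerM a b z) := by
  rw [kummerM_eq]
  exact (summable_term a b hb z).hasSum

lemma kummerM_zero (a b : ℂ) : kummerM a b 0 = 1 := by
  rw [kummerM_eq]
  rw [tsum_eq_single 0 (fun n hn => by
    rw [zero_pow hn, mul_zero])]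
  rw [pow_zero, mul_one, kT_zero]

lemma hasDerivAt_kummerM (a b : ℂ) (hb : ∀ k : ℕ, b + (k:ℂ) ≠ 0) (z : ℂ) :
    HasDerivAt (fun w => kummerM a b w) ((a/b) * kummerM (a+1) (b+1) z) z := by
  have hb0 : b ≠ 0 := by simpa using hb 0
  set R : ℝ := ‖z‖ + 1 with hRdef
  have hR1 : (1:ℝ) ≤ R := by simp only [hRdef]; linarith [norm_nonneg z]
  have hR0 : (0:ℝ) ≤ R := by linarith
  have hzmem : z ∈ Metric.ball (0:ℂ) R := by
    rw [Metric.mem_ball, dist_zero_right]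
    simp only [hRdef]
    linarith
  -- the derivative given by the general theorem
  have key : HasDerivAt (fun w => ∑' n : ℕ, kT a b n * w^n)
      (∑' n : ℕ, kT a b n * ((n:ℂ) * z^(n-1))) z := by
    apply hasDerivAt_tsum_of_isPreconnected
      (u := fun n : ℕ => ((n:ℝ)+1) * ‖kT a b n‖ * R^n)
      (summable_kT a b hb R hR0) Metric.isOpen_ball
      (convex_ball (0:ℂ) R).isPreconnected
      (fun n y _ => (hasDerivAt_pow n y).const_mul (kT a b n))
      ?_ (Metric.mem_ball_self (by linarith : (0:ℝ) < R)) ?_ hzmem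
    · intro n y hy
      rw [norm_mul, norm_mul, norm_pow, Complex.norm_natCast]
      have hyR : ‖y‖ ≤ R := by
        rw [Metric.mem_ball, dist_zero_right] at hy
        linarith
      have hy0 : 0 ≤ ‖y‖ := norm_nonneg _
      have hpow : ‖y‖^(n-1) ≤ R^n := by
        calc ‖y‖^(n-1) ≤ R^(n-1) := pow_le_pow_left₀ hy0 hyR _
          _ ≤ R^n := pow_le_pow_right₀ hR1 (Nat.sub_le n 1)
      have hn : (n:ℝ) ≤ (n:ℝ)+1 := by linarith
      have h0 : (0:ℝ) ≤ ‖kT a b n‖ := norm_nonneg _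
      calc ‖kT a b n‖ * ((n:ℝ) * ‖y‖^(n-1))
          ≤ ‖kT a b n‖ * (((n:ℝ)+1) * R^n) := by
            apply mul_le_mul_of_nonneg_left _ h0
            apply mul_le_mul hn hpow (by positivity) (by positivity)
        _ = ((n:ℝ)+1) * ‖kT a b n‖ * R^n := by ring
    · exact summable_term a b hb 0
  -- identify the derivative
  have hder : (∑' n : ℕ, kT a b n * ((n:ℂ) * z^(n-1)))
      = (a/b) * kummerM (a+1) (b+1) z := by
    have h2 : HasSum (fun m : ℕ => (a/b) * (kT (a+1) (b+1) m * z^m))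
        ((a/b) * kummerM (a+1) (b+1) z) :=
      (hasSum_kummerM (a+1) (b+1) (hb_succ b hb) z).mul_left _
    have h3 : ∀ m : ℕ, (a/b) * (kT (a+1) (b+1) m * z^m)
        = kT a b (m+1) * (((m+1:ℕ):ℂ) * z^((m+1)-1)) := by
      intro m
      have := kT_shift a b hb m
      simp only [Nat.add_sub_cancel]
      push_cast
      calc (a/b) * (kT (a+1) (b+1) m * z^m) = ((a/b) * kT (a+1) (b+1) m) * z^m := by ring
        _ = (((m:ℂ)+1) * kT a b (m+1)) * z^m := by rw [← this]
        _ = kT a b (m+1) * (((m:ℂ)+1) * z^m) := by ring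
    rw [funext h3] at h2
    have h4 : HasSum (fun n : ℕ => kT a b n * ((n:ℂ) * z^(n-1)))
        ((a/b) * kummerM (a+1) (b+1) z) := by
      refine (hasSum_nat_add_iff' 1).1 ?_
      simpa using h2
    exact h4.tsum_eq
  rw [← hder]
  have : (fun w => kummerM a b w) = (fun w => ∑' n : ℕ, kT a b n * w^n) := by
    ext w; exact kummerM_eq a b w
  rw [this]
  exact key

lemma hb_succ2 (b : ℂ) (hb : ∀ k : ℕ, b + (k:ℂ) ≠ 0) : ∀ k : ℕ, (b+2) + (k:ℂ) ≠ 0 := by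
  have h := hb_succ (b+1) (hb_succ b hb)
  intro k
  have := h k
  intro hc
  exact this (by linear_combination hc)

lemma kummer_ode (a b : ℂ) (hb : ∀ k : ℕ, b + (k:ℂ) ≠ 0) (z : ℂ) :
    z * ((a/b)*((a+1)/(b+1))*kummerM (a+2) (b+2) z)
      + (b - z)*((a/b)*kummerM (a+1) (b+1) z) - a * kummerM a b z = 0 := by
  set S := kummerM a b z
  set D1 := (a/b) * kummerM (a+1) (b+1) z with hD1
  set D2 := (a/b)*((a+1)/(b+1)) * kummerM (a+2) (b+2) z with hD2
  have h1 : HasSum (fun n : ℕ => kT a b n * z^n) S := hasSum_kummerM a b hb z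
  -- first derivative series
  have h2 : HasSum (fun n : ℕ => ((n:ℂ)+1) * kT a b (n+1) * z^n) D1 := by
    have := (hasSum_kummerM (a+1) (b+1) (hb_succ b hb) z).mul_left (a/b)
    rw [hD1]
    convert this using 2 with n
    · rfl
    rw [← mul_assoc, ← kT_shift a b hb n]
  -- second derivative series
  have h3 : HasSum (fun n : ℕ => ((n:ℂ)+1)*((n:ℂ)+2) * kT a b (n+2) * z^n) D2 := by
    have hstep : ∀ n : ℕ, ((n:ℂ)+1)*((n:ℂ)+2) * kT a b (n+2)
        = (a/b)*((a+1)/(b+1)) * kT (a+2) (b+2) n := by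
      intro n
      have e1 := kT_shift (a+1) (b+1) (hb_succ b hb) n
      have e2 := kT_shift a b hb (n+1)
      push_cast at e2
      have e2' : ((n:ℂ)+2) * kT a b (n+2) = (a/b) * kT (a+1) (b+1) (n+1) := by
        linear_combination e2
      have goal2 : ((n:ℂ)+1) * ((a/b) * kT (a+1) (b+1) (n+1))
          = (a/b) * ((a+1)/(b+1) * kT (a+2) (b+2) n) := by
        rw [show ((n:ℂ)+1) * ((a/b) * kT (a+1) (b+1) (n+1))
          = (a/b) * (((n:ℂ)+1) * kT (a+1) (b+1) (n+1)) by ring, e1,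
          show a+1+1 = a+2 from by ring, show b+1+1 = b+2 from by ring]
      calc ((n:ℂ)+1)*((n:ℂ)+2) * kT a b (n+2)
          = ((n:ℂ)+1) * (((n:ℂ)+2) * kT a b (n+2)) := by ring
        _ = ((n:ℂ)+1) * ((a/b) * kT (a+1) (b+1) (n+1)) := by rw [e2']
        _ = (a/b) * ((a+1)/(b+1) * kT (a+2) (b+2) n) := goal2
        _ = (a/b)*((a+1)/(b+1)) * kT (a+2) (b+2) n := by ring
    have := (hasSum_kummerM (a+2) (b+2) (hb_succ2 b hb) z).mul_left ((a/b)*((a+1)/(b+1)))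
    rw [hD2]
    convert this using 2 with n
    · rfl
    rw [← mul_assoc, hstep n]
  -- z * D2 as a series
  have hzD2 : HasSum (fun n : ℕ => (n:ℂ)*((n:ℂ)+1) * kT a b (n+1) * z^n) (z * D2) := by
    refine (hasSum_nat_add_iff' 1).1 ?_
    simp only [Finset.sum_range_one, Nat.cast_zero, zero_mul, mul_zero, sub_zero,
      Nat.cast_add, Nat.cast_one, zero_add]
    have := h3.mul_left z
    convert this using 2 with n
    · rfl
    push_cast
    ring
  -- z * D1 as a series
  have hzD1 : HasSum (fun n : ℕ => (n:ℂ) * kT a b n * z^n) (z * D1) := by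
    refine (hasSum_nat_add_iff' 1).1 ?_
    simp only [Finset.sum_range_one, Nat.cast_zero, zero_mul, mul_zero, sub_zero,
      Nat.cast_add, Nat.cast_one, zero_add]
    have := h2.mul_left z
    convert this using 2 with n
    · rfl
    push_cast
    ring
  -- combine
  have hbD1 : HasSum (fun n : ℕ => b * (((n:ℂ)+1) * kT a b (n+1) * z^n)) (b * D1) :=
    h2.mul_left b
  have haS : HasSum (fun n : ℕ => a * (kT a b n * z^n)) (a * S) := h1.mul_left a
  have hcomb : HasSum (fun n : ℕ =>
      (n:ℂ)*((n:ℂ)+1) * kT a b (n+1) * z^n + b * (((n:ℂ)+1) * kT a b (n+1) * z^n)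
        - (n:ℂ) * kT a b n * z^n - a * (kT a b n * z^n))
      (z * D2 + b * D1 - z * D1 - a * S) := ((hzD2.add hbD1).sub hzD1).sub haS
  have hzero : (fun n : ℕ =>
      (n:ℂ)*((n:ℂ)+1) * kT a b (n+1) * z^n + b * (((n:ℂ)+1) * kT a b (n+1) * z^n)
        - (n:ℂ) * kT a b n * z^n - a * (kT a b n * z^n)) = fun _ => (0:ℂ) := by
    ext n
    linear_combination (z^n) * kT_succ a b hb n
  rw [hzero] at hcomb
  have := hcomb.unique hasSum_zero
  linear_combination this

lemma hb_half : ∀ k : ℕ, (1/2:ℂ) + (k:ℂ) ≠ 0 := by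
  intro k h
  have hre := congrArg Complex.re h
  simp only [Complex.add_re, Complex.natCast_re, Complex.zero_re] at hre
  norm_num at hre
  nlinarith [Nat.cast_nonneg (α:=ℝ) k]

lemma hb_3half : ∀ k : ℕ, (3/2:ℂ) + (k:ℂ) ≠ 0 := by
  intro k h
  have hre := congrArg Complex.re h
  simp only [Complex.add_re, Complex.natCast_re, Complex.zero_re] at hre
  norm_num at hre
  nlinarith [Nat.cast_nonneg (α:=ℝ) k]

noncomputable def hA (ν : ℂ) : ℂ :=
  (2:ℂ)^ν * (Real.sqrt Real.pi : ℂ) / Complex.Gamma ((1 - ν)/2)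

noncomputable def hB (ν : ℂ) : ℂ :=
  (2:ℂ)^(ν+1) * (Real.sqrt Real.pi : ℂ) / Complex.Gamma (-ν/2)

lemma hermiteFn_eq' (ν z : ℂ) : hermiteFn ν z
    = hA ν * kummerM (-ν/2) (1/2) (z^2)
      - hB ν * (z * kummerM ((1-ν)/2) (3/2) (z^2)) := by
  unfold hermiteFn hA hB
  ring

noncomputable def kD1 (ν w : ℂ) : ℂ := (-ν/2/(1/2)) * kummerM (-ν/2+1) (1/2+1) w
noncomputable def kD2 (ν w : ℂ) : ℂ := ((1-ν)/2/(3/2)) * kummerM ((1-ν)/2+1) (3/2+1) w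
noncomputable def kDD1 (ν w : ℂ) : ℂ :=
  (-ν/2/(1/2)) * ((-ν/2+1)/(1/2+1)) * kummerM (-ν/2+2) (1/2+2) w
noncomputable def kDD2 (ν w : ℂ) : ℂ :=
  ((1-ν)/2/(3/2)) * (((1-ν)/2+1)/(3/2+1)) * kummerM ((1-ν)/2+2) (3/2+2) w

noncomputable def hermD (ν z : ℂ) : ℂ :=
  hA ν * (2*z*kD1 ν (z^2))
    - hB ν * (kummerM ((1-ν)/2) (3/2) (z^2) + 2*z^2*kD2 ν (z^2))

noncomputable def hermDD (ν z : ℂ) : ℂ :=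
  hA ν * (2*kD1 ν (z^2) + 4*z^2*kDD1 ν (z^2))
    - hB ν * (6*z*kD2 ν (z^2) + 4*z^3*kDD2 ν (z^2))

lemma hasDerivAt_kD1 (ν z : ℂ) :
    HasDerivAt (fun w => kD1 ν w) (kDD1 ν z) z := by
  have h := (hasDerivAt_kummerM (-ν/2+1) (1/2+1) (hb_succ _ hb_half) z).const_mul (-ν/2/(1/2))
  have e1 : -ν/2+1+1 = -ν/2+2 := by ring
  have e2 : (1/2:ℂ)+1+1 = 1/2+2 := by ring
  rw [e1, e2] at h
  unfold kD1 kDD1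
  refine h.congr_deriv ?_
  ring

lemma hasDerivAt_kD2 (ν z : ℂ) :
    HasDerivAt (fun w => kD2 ν w) (kDD2 ν z) z := by
  have h := (hasDerivAt_kummerM ((1-ν)/2+1) (3/2+1) (hb_succ _ hb_3half) z).const_mul ((1-ν)/2/(3/2))
  have e1 : (1-ν)/2+1+1 = (1-ν)/2+2 := by ring
  have e2 : (3/2:ℂ)+1+1 = 3/2+2 := by ring
  rw [e1, e2] at h
  unfold kD2 kDD2
  refine h.congr_deriv ?_
  ring

lemma hasDerivAt_hermiteFn (ν z : ℂ) :
    HasDerivAt (fun w => hermiteFn ν w) (hermD ν z) z := by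
  have hsq : HasDerivAt (fun w : ℂ => w^2) (2*z) z := by
    simpa using hasDerivAt_pow 2 z
  have h1 : HasDerivAt (fun w : ℂ => kummerM (-ν/2) (1/2) (w^2))
      ((-ν/2/(1/2)) * kummerM (-ν/2+1) (1/2+1) (z^2) * (2*z)) z :=
    by have := (hasDerivAt_kummerM (-ν/2) (1/2) hb_half (z^2)).comp z hsq; exact this
  have h2 : HasDerivAt (fun w : ℂ => kummerM ((1-ν)/2) (3/2) (w^2))
      (((1-ν)/2/(3/2)) * kummerM ((1-ν)/2+1) (3/2+1) (z^2) * (2*z)) z :=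
    by have := (hasDerivAt_kummerM ((1-ν)/2) (3/2) hb_3half (z^2)).comp z hsq; exact this
  have hmul : HasDerivAt (fun w : ℂ => w * kummerM ((1-ν)/2) (3/2) (w^2))
      (1 * kummerM ((1-ν)/2) (3/2) (z^2)
        + z * (((1-ν)/2/(3/2)) * kummerM ((1-ν)/2+1) (3/2+1) (z^2) * (2*z))) z :=
    (hasDerivAt_id z).mul h2
  have htot := (h1.const_mul (hA ν)).sub (hmul.const_mul (hB ν))
  have hfun : (fun w => hermiteFn ν w)
      = fun w => hA ν * kummerM (-ν/2) (1/2) (w^2)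
        - hB ν * (w * kummerM ((1-ν)/2) (3/2) (w^2)) := by
    ext w; exact hermiteFn_eq' ν w
  rw [hfun]
  refine htot.congr_deriv ?_
  unfold hermD kD1 kD2
  ring

lemma hasDerivAt_hermD (ν z : ℂ) :
    HasDerivAt (fun w => hermD ν w) (hermDD ν z) z := by
  have hsq : HasDerivAt (fun w : ℂ => w^2) (2*z) z := by
    simpa using hasDerivAt_pow 2 z
  have hd1 : HasDerivAt (fun w : ℂ => kD1 ν (w^2)) (kDD1 ν (z^2) * (2*z)) z :=
    by have := (hasDerivAt_kD1 ν (z^2)).comp z hsq; exact this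
  have hd2 : HasDerivAt (fun w : ℂ => kD2 ν (w^2)) (kDD2 ν (z^2) * (2*z)) z :=
    by have := (hasDerivAt_kD2 ν (z^2)).comp z hsq; exact this
  have c1 : HasDerivAt (fun w : ℂ => 2*w) 2 z := by
    simpa using (hasDerivAt_id z).const_mul (2:ℂ)
  have t1 : HasDerivAt (fun w : ℂ => 2*w*kD1 ν (w^2))
      (2 * kD1 ν (z^2) + (2*z) * (kDD1 ν (z^2) * (2*z))) z := c1.mul hd1
  have t2a : HasDerivAt (fun w : ℂ => kummerM ((1-ν)/2) (3/2) (w^2))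
      (((1-ν)/2/(3/2)) * kummerM ((1-ν)/2+1) (3/2+1) (z^2) * (2*z)) z :=
    by have := (hasDerivAt_kummerM ((1-ν)/2) (3/2) hb_3half (z^2)).comp z hsq; exact this
  have c2 : HasDerivAt (fun w : ℂ => 2*w^2) (2*((2:ℂ)*z^1)) z :=
    (hasDerivAt_pow 2 z).const_mul 2
  have t2b : HasDerivAt (fun w : ℂ => 2*w^2*kD2 ν (w^2))
      ((2*((2:ℂ)*z^1)) * kD2 ν (z^2) + (2*z^2) * (kDD2 ν (z^2) * (2*z))) z := c2.mul hd2
  have htot := (t1.const_mul (hA ν)).sub ((t2a.add t2b).const_mul (hB ν))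
  have hfun : (fun w => hermD ν w)
      = fun w => hA ν * (2*w*kD1 ν (w^2))
        - hB ν * (kummerM ((1-ν)/2) (3/2) (w^2) + 2*w^2*kD2 ν (w^2)) := by
    ext w; rfl
  rw [hfun]
  refine htot.congr_deriv ?_
  unfold hermDD kD2
  ring

lemma herm_ode (ν z : ℂ) :
    hermDD ν z - 2*z*hermD ν z + 2*ν*hermiteFn ν z = 0 := by
  have o1 := kummer_ode (-ν/2) (1/2) hb_half (z^2)
  have o2 := kummer_ode ((1-ν)/2) (3/2) hb_3half (z^2)
  rw [hermiteFn_eq']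
  unfold hermDD hermD kDD1 kDD2 kD1 kD2
  linear_combination (4*hA ν) * o1 - (4*z*hB ν) * o2

lemma hermiteFn_zero (ν : ℂ) : hermiteFn ν 0 = hA ν := by
  rw [hermiteFn_eq']
  norm_num [kummerM_zero]

lemma hermD_zero (ν : ℂ) : hermD ν 0 = -hB ν := by
  unfold hermD
  norm_num [kummerM_zero]

lemma expL_deriv (z : ℂ) :
    HasDerivAt (fun w : ℂ => Complex.exp (-w^2/2)) (Complex.exp (-z^2/2) * (-z)) z := by
  have hu : HasDerivAt (fun w : ℂ => -w^2/2) (-z) z := by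
    have := ((hasDerivAt_pow 2 z).neg).div_const 2
    refine this.congr_deriv ?_
    ring
  exact (Complex.hasDerivAt_exp _).comp z hu

lemma expR_deriv (z : ℂ) :
    HasDerivAt (fun w : ℂ => Complex.exp (w^2/2)) (Complex.exp (z^2/2) * z) z := by
  have hu : HasDerivAt (fun w : ℂ => w^2/2) z z := by
    have := (hasDerivAt_pow 2 z).div_const 2
    refine this.congr_deriv ?_
    ring
  exact (Complex.hasDerivAt_exp _).comp z hu

lemma solL_deriv (ν z : ℂ) :
    HasDerivAt (fun w : ℂ => Complex.exp (-w^2/2) * hermiteFn ν w)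
      (Complex.exp (-z^2/2) * (hermD ν z - z * hermiteFn ν z)) z := by
  have := (expL_deriv z).mul (hasDerivAt_hermiteFn ν z)
  refine this.congr_deriv ?_
  ring

lemma solL_deriv2 (ν z : ℂ) :
    HasDerivAt (fun w : ℂ => Complex.exp (-w^2/2) * (hermD ν w - w * hermiteFn ν w))
      (Complex.exp (-z^2/2)
        * (hermDD ν z - 2*z*hermD ν z + (z^2-1)*hermiteFn ν z)) z := by
  have hin : HasDerivAt (fun w : ℂ => hermD ν w - w * hermiteFn ν w)
      (hermDD ν z - (1 * hermiteFn ν z + z * hermD ν z)) z :=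
    (hasDerivAt_hermD ν z).sub ((hasDerivAt_id z).mul (hasDerivAt_hermiteFn ν z))
  have := (expL_deriv z).mul hin
  refine this.congr_deriv ?_
  ring

lemma solL_ode (n : ℕ) (z : ℂ) :
    Complex.exp (-z^2/2)
        * (hermDD (-(n:ℂ)-1) z - 2*z*hermD (-(n:ℂ)-1) z + (z^2-1)*hermiteFn (-(n:ℂ)-1) z)
      = (z^2 + 2*(n:ℂ) + 1) * (Complex.exp (-z^2/2) * hermiteFn (-(n:ℂ)-1) z) := by
  linear_combination (Complex.exp (-z^2/2)) * herm_ode (-(n:ℂ)-1) z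

lemma solR_deriv (ν z : ℂ) :
    HasDerivAt (fun w : ℂ => Complex.exp (w^2/2) * hermiteFn ν (I*w))
      (Complex.exp (z^2/2) * (z * hermiteFn ν (I*z) + I * hermD ν (I*z))) z := by
  have hIw : HasDerivAt (fun w : ℂ => I*w) I z := by
    simpa using (hasDerivAt_id z).const_mul I
  have hcomp : HasDerivAt (fun w : ℂ => hermiteFn ν (I*w)) (hermD ν (I*z) * I) z :=
    (hasDerivAt_hermiteFn ν (I*z)).comp z hIw
  have := (expR_deriv z).mul hcomp
  refine this.congr_deriv ?_
  ring

lemma solR_deriv2 (ν z : ℂ) :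
    HasDerivAt (fun w : ℂ => Complex.exp (w^2/2) * (w * hermiteFn ν (I*w) + I * hermD ν (I*w)))
      (Complex.exp (z^2/2)
        * ((1+z^2) * hermiteFn ν (I*z) + 2*I*z*hermD ν (I*z) - hermDD ν (I*z))) z := by
  have hIw : HasDerivAt (fun w : ℂ => I*w) I z := by
    simpa using (hasDerivAt_id z).const_mul I
  have hcomp : HasDerivAt (fun w : ℂ => hermiteFn ν (I*w)) (hermD ν (I*z) * I) z :=
    (hasDerivAt_hermiteFn ν (I*z)).comp z hIw
  have hcompD : HasDerivAt (fun w : ℂ => hermD ν (I*w)) (hermDD ν (I*z) * I) z :=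
    (hasDerivAt_hermD ν (I*z)).comp z hIw
  have hin : HasDerivAt (fun w : ℂ => w * hermiteFn ν (I*w) + I * hermD ν (I*w))
      ((1 * hermiteFn ν (I*z) + z * (hermD ν (I*z) * I)) + I * (hermDD ν (I*z) * I)) z :=
    ((hasDerivAt_id z).mul hcomp).add (hcompD.const_mul I)
  have := (expR_deriv z).mul hin
  refine this.congr_deriv ?_
  linear_combination (Complex.exp (z^2/2) * hermDD ν (I*z)) * Complex.I_sq

lemma solR_ode (n : ℕ) (z : ℂ) :
    Complex.exp (z^2/2)
        * ((1+z^2) * hermiteFn (n:ℂ) (I*z) + 2*I*z*hermD (n:ℂ) (I*z) - hermDD (n:ℂ) (I*z))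
      = (z^2 + 2*(n:ℂ) + 1) * (Complex.exp (z^2/2) * hermiteFn (n:ℂ) (I*z)) := by
  linear_combination (-(Complex.exp (z^2/2))) * herm_ode (n:ℂ) (I*z)

lemma cos_nat_pi (m : ℕ) : Complex.cos ((m:ℂ) * (Real.pi:ℂ)) = (-1)^m := by
  induction m with
  | zero => simp
  | succ k ih =>
    push_cast
    rw [add_mul, one_mul, Complex.cos_add, Complex.cos_pi, Complex.sin_pi]
    push_cast at ih
    rw [ih]
    ring

lemma sin_nat_pi (m : ℕ) : Complex.sin ((m:ℂ) * (Real.pi:ℂ)) = 0 := by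
  induction m with
  | zero => simp
  | succ k ih =>
    push_cast
    rw [add_mul, one_mul, Complex.sin_add, Complex.cos_pi, Complex.sin_pi]
    push_cast at ih
    rw [ih]
    ring

lemma sin_half' (m : ℕ) :
    Complex.sin ((m:ℂ)*(Real.pi:ℂ) + (Real.pi:ℂ)/2) = (-1)^m := by
  rw [Complex.sin_add, Complex.sin_pi_div_two, Complex.cos_pi_div_two,
    sin_nat_pi, cos_nat_pi]
  ring

lemma sqrtpi_sq : ((Real.sqrt Real.pi : ℝ):ℂ) * ((Real.sqrt Real.pi : ℝ):ℂ) = (Real.pi:ℂ) := by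
  rw [← Complex.ofReal_mul, Real.mul_self_sqrt Real.pi_pos.le]

lemma pow_cancel1 (n : ℕ) : (2:ℂ)^(-(n:ℂ)-1) * (2:ℂ)^((n:ℂ)+1) = 1 := by
  rw [← Complex.cpow_add _ _ (by norm_num : (2:ℂ) ≠ 0)]
  norm_num

lemma pow_cancel2 (n : ℕ) : (2:ℂ)^(-(n:ℂ)-1+1) * (2:ℂ)^((n:ℂ)) = 1 := by
  rw [← Complex.cpow_add _ _ (by norm_num : (2:ℂ) ≠ 0)]
  norm_num

lemma final_eval (n : ℕ) :
    hA (-(n:ℂ)-1) * (I * -hB (n:ℂ)) - -hB (-(n:ℂ)-1) * hA (n:ℂ) = I^n := by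
  have hπ : (Real.pi:ℂ) ≠ 0 := by simpa using Real.pi_ne_zero
  unfold hA hB
  rw [show (1 - (-(n:ℂ)-1))/2 = ((n:ℂ)+2)/2 by ring,
      show -(-(n:ℂ)-1)/2 = ((n:ℂ)+1)/2 by ring]
  set s : ℂ := ((Real.sqrt Real.pi : ℝ):ℂ) with hs
  rcases Nat.even_or_odd n with he | ho
  · obtain ⟨m, rfl⟩ := he
    have hG2 : Complex.Gamma (-((m+m:ℕ):ℂ)/2) = 0 := by
      rw [show -((m+m:ℕ):ℂ)/2 = -((m:ℕ):ℂ) by push_cast; ring]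
      exact Complex.Gamma_neg_nat_eq_zero m
    simp only [hG2, div_zero, mul_zero, neg_zero, zero_sub, neg_mul, neg_neg]
    have hrefl := Complex.Gamma_mul_Gamma_one_sub ((((m+m:ℕ):ℂ)+1)/2)
    rw [show (1:ℂ) - (((m+m:ℕ):ℂ)+1)/2 = (1-((m+m:ℕ):ℂ))/2 by ring] at hrefl
    have hsin : Complex.sin ((Real.pi:ℂ) * ((((m+m:ℕ):ℂ)+1)/2)) = (-1)^m := by
      rw [show (Real.pi:ℂ) * ((((m+m:ℕ):ℂ)+1)/2)
        = (m:ℂ)*(Real.pi:ℂ) + (Real.pi:ℂ)/2 by push_cast; ring]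
      exact sin_half' m
    rw [hsin] at hrefl
    rw [div_mul_div_comm, hrefl, div_div_eq_mul_div]
    have hx : (2:ℂ)^(-((m+m:ℕ):ℂ)-1+1) * s * ((2:ℂ)^(((m+m:ℕ)):ℂ) * s) = (Real.pi:ℂ) := by
      calc (2:ℂ)^(-((m+m:ℕ):ℂ)-1+1) * s * ((2:ℂ)^(((m+m:ℕ)):ℂ) * s)
          = ((2:ℂ)^(-((m+m:ℕ):ℂ)-1+1) * (2:ℂ)^(((m+m:ℕ)):ℂ)) * (s*s) := by ring
        _ = 1 * (Real.pi:ℂ) := by rw [pow_cancel2, hs, sqrtpi_sq]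
        _ = (Real.pi:ℂ) := one_mul _
    rw [hx, mul_comm, mul_div_assoc, div_self hπ, mul_one, pow_add, ← mul_pow,
      Complex.I_mul_I]
  · obtain ⟨m, rfl⟩ := ho
    have hG4 : Complex.Gamma ((1-((2*m+1:ℕ):ℂ))/2) = 0 := by
      rw [show (1-((2*m+1:ℕ):ℂ))/2 = -((m:ℕ):ℂ) by push_cast; ring]
      exact Complex.Gamma_neg_nat_eq_zero m
    rw [hG4, div_zero, mul_zero, sub_zero]
    have hrefl := Complex.Gamma_mul_Gamma_one_sub (-((2*m+1:ℕ):ℂ)/2)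
    rw [show (1:ℂ) - (-((2*m+1:ℕ):ℂ)/2) = (((2*m+1:ℕ):ℂ)+2)/2 by ring] at hrefl
    have hsin : Complex.sin ((Real.pi:ℂ) * (-((2*m+1:ℕ):ℂ)/2)) = -(-1:ℂ)^m := by
      rw [show (Real.pi:ℂ) * (-((2*m+1:ℕ):ℂ)/2)
        = -((m:ℂ)*(Real.pi:ℂ) + (Real.pi:ℂ)/2) by push_cast; ring]
      rw [Complex.sin_neg, sin_half']
    rw [hsin] at hrefl
    have step : (2:ℂ)^(-((2*m+1:ℕ):ℂ)-1) * s / Complex.Gamma ((((2*m+1:ℕ):ℂ)+2)/2)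
        * (I * -((2:ℂ)^(((2*m+1:ℕ):ℂ)+1) * s / Complex.Gamma (-((2*m+1:ℕ):ℂ)/2)))
        = -I * ((2:ℂ)^(-((2*m+1:ℕ):ℂ)-1) * s * ((2:ℂ)^(((2*m+1:ℕ):ℂ)+1) * s)
            / (Complex.Gamma (-((2*m+1:ℕ):ℂ)/2) * Complex.Gamma ((((2*m+1:ℕ):ℂ)+2)/2))) := by
      ring
    rw [step, hrefl]
    have hx : (2:ℂ)^(-((2*m+1:ℕ):ℂ)-1) * s * ((2:ℂ)^(((2*m+1:ℕ):ℂ)+1) * s) = (Real.pi:ℂ) := by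
      calc (2:ℂ)^(-((2*m+1:ℕ):ℂ)-1) * s * ((2:ℂ)^(((2*m+1:ℕ):ℂ)+1) * s)
          = ((2:ℂ)^(-((2*m+1:ℕ):ℂ)-1) * (2:ℂ)^(((2*m+1:ℕ):ℂ)+1)) * (s*s) := by ring
        _ = 1 * (Real.pi:ℂ) := by rw [pow_cancel1, hs, sqrtpi_sq]
        _ = (Real.pi:ℂ) := one_mul _
    rw [div_div_eq_mul_div, hx, mul_comm (Real.pi:ℂ), mul_div_assoc, div_self hπ, mul_one]
    rw [pow_succ, pow_mul, Complex.I_sq]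
    ring

theorem wronskian_hermite_solutions (n : ℕ) :
    ∀ η : ℝ,
      (Complex.exp (-(η:ℂ)^2/2) * hermiteFn (-(n:ℂ) - 1) (η:ℂ))
          * deriv (fun t : ℝ => Complex.exp ((t:ℂ)^2/2) * hermiteFn (n:ℂ) (I * t)) η
        - deriv (fun t : ℝ => Complex.exp (-(t:ℂ)^2/2) * hermiteFn (-(n:ℂ) - 1) (t:ℂ)) η
          * (Complex.exp ((η:ℂ)^2/2) * hermiteFn (n:ℂ) (I * η))
      = I^n := by
  intro η
  -- the Wronskian as a function of a real variable
  set W : ℝ → ℂ := fun t =>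
    (Complex.exp (-(t:ℂ)^2/2) * hermiteFn (-(n:ℂ)-1) (t:ℂ))
      * (Complex.exp ((t:ℂ)^2/2)
          * ((t:ℂ) * hermiteFn (n:ℂ) (I*(t:ℂ)) + I * hermD (n:ℂ) (I*(t:ℂ))))
    - (Complex.exp (-(t:ℂ)^2/2)
          * (hermD (-(n:ℂ)-1) (t:ℂ) - (t:ℂ) * hermiteFn (-(n:ℂ)-1) (t:ℂ)))
      * (Complex.exp ((t:ℂ)^2/2) * hermiteFn (n:ℂ) (I*(t:ℂ))) with hW
  have hW0 : ∀ t : ℝ, HasDerivAt W 0 t := by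
    intro t
    have h1 := (solL_deriv (-(n:ℂ)-1) (t:ℂ)).comp_ofReal
    have h2 := (solR_deriv (n:ℂ) (t:ℂ)).comp_ofReal
    have h3 := (solL_deriv2 (-(n:ℂ)-1) (t:ℂ)).comp_ofReal
    have h4 := (solR_deriv2 (n:ℂ) (t:ℂ)).comp_ofReal
    have hcomb := (h1.mul h4).sub (h3.mul h2)
    have heq : (Complex.exp (-(t:ℂ)^2/2) * (hermD (-(n:ℂ)-1) (t:ℂ)
          - (t:ℂ) * hermiteFn (-(n:ℂ)-1) (t:ℂ)))
          * (Complex.exp ((t:ℂ)^2/2)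
            * ((t:ℂ) * hermiteFn (n:ℂ) (I*(t:ℂ)) + I * hermD (n:ℂ) (I*(t:ℂ))))
        + (Complex.exp (-(t:ℂ)^2/2) * hermiteFn (-(n:ℂ)-1) (t:ℂ))
          * (Complex.exp ((t:ℂ)^2/2) * ((1+(t:ℂ)^2) * hermiteFn (n:ℂ) (I*(t:ℂ))
              + 2*I*(t:ℂ)*hermD (n:ℂ) (I*(t:ℂ)) - hermDD (n:ℂ) (I*(t:ℂ))))
        - ((Complex.exp (-(t:ℂ)^2/2) * (hermDD (-(n:ℂ)-1) (t:ℂ)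
              - 2*(t:ℂ)*hermD (-(n:ℂ)-1) (t:ℂ) + ((t:ℂ)^2-1)*hermiteFn (-(n:ℂ)-1) (t:ℂ)))
            * (Complex.exp ((t:ℂ)^2/2) * hermiteFn (n:ℂ) (I*(t:ℂ)))
          + (Complex.exp (-(t:ℂ)^2/2) * (hermD (-(n:ℂ)-1) (t:ℂ)
              - (t:ℂ) * hermiteFn (-(n:ℂ)-1) (t:ℂ)))
            * (Complex.exp ((t:ℂ)^2/2)
              * ((t:ℂ) * hermiteFn (n:ℂ) (I*(t:ℂ)) + I * hermD (n:ℂ) (I*(t:ℂ)))))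
        = 0 := by
      have o1 := solL_ode n (t:ℂ)
      have o2 := solR_ode n (t:ℂ)
      linear_combination (Complex.exp (-(t:ℂ)^2/2) * hermiteFn (-(n:ℂ)-1) (t:ℂ)) * o2
        - (Complex.exp ((t:ℂ)^2/2) * hermiteFn (n:ℂ) (I*(t:ℂ))) * o1
    rw [hW]
    rw [← heq]
    exact hcomb
  have hWconst : W η = W 0 :=
    is_const_of_deriv_eq_zero (fun t => (hW0 t).differentiableAt)
      (fun t => (hW0 t).deriv) η 0
  have hd1 : deriv (fun t : ℝ => Complex.exp (-(t:ℂ)^2/2) * hermiteFn (-(n:ℂ) - 1) (t:ℂ)) η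
      = Complex.exp (-(η:ℂ)^2/2)
          * (hermD (-(n:ℂ)-1) (η:ℂ) - (η:ℂ) * hermiteFn (-(n:ℂ)-1) (η:ℂ)) :=
    HasDerivAt.deriv ((solL_deriv (-(n:ℂ)-1) (η:ℂ)).comp_ofReal)
  have hd2 : deriv (fun t : ℝ => Complex.exp ((t:ℂ)^2/2) * hermiteFn (n:ℂ) (I * t)) η
      = Complex.exp ((η:ℂ)^2/2)
          * ((η:ℂ) * hermiteFn (n:ℂ) (I*(η:ℂ)) + I * hermD (n:ℂ) (I*(η:ℂ))) :=
    HasDerivAt.deriv ((solR_deriv (n:ℂ) (η:ℂ)).comp_ofReal)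
  rw [hd1, hd2]
  have : W η = I^n := by
    rw [hWconst, hW]
    simp only [Complex.ofReal_zero, mul_zero, zero_mul, neg_zero, zero_pow,
      Complex.exp_zero, one_mul, mul_one, zero_add, sub_zero, zero_div, ne_eq]
    norm_num
    rw [hermiteFn_zero, hermiteFn_zero, hermD_zero, hermD_zero]
    linear_combination final_eval n
  rw [← this, hW]
end

section
/- For every real λ, with G₁ = Γ(1/4 + iλ/2) and G₂ = Γ(3/4 + iλ/2), one has Re(G₁·conj(G₂)) + Im(G₁·conj(G₂)) = π√2 e^{-πλ/2} / cosh(πλ). -/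
open Complex

theorem re_add_im_gamma_product (lam : ℝ) :
    ((Complex.Gamma (1/4 + I * lam/2) * (starRingEnd ℂ) (Complex.Gamma (3/4 + I * lam/2))).re
      + (Complex.Gamma (1/4 + I * lam/2)
          * (starRingEnd ℂ) (Complex.Gamma (3/4 + I * lam/2))).im)
      = Real.pi * Real.sqrt 2 * Real.exp (-Real.pi * lam / 2) / Real.cosh (Real.pi * lam) := by
  have h1 : (starRingEnd ℂ) (Complex.Gamma (3/4 + I * lam/2))
      = Complex.Gamma (1 - (1/4 + I * lam/2)) := by
    rw [← Complex.Gamma_conj]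
    congr 1
    simp [map_add, map_mul, map_div₀, Complex.conj_I, Complex.conj_ofReal,
      map_ofNat (starRingEnd ℂ) 3, map_ofNat (starRingEnd ℂ) 4, map_ofNat (starRingEnd ℂ) 2]
    ring
  rw [h1, Complex.Gamma_mul_Gamma_one_sub]
  obtain ⟨t, ht⟩ : ∃ t : ℝ, t = Real.pi * lam / 2 := ⟨_, rfl⟩
  set z : ℂ := ↑Real.pi * (1/4 + I * lam/2) with hz
  have hzre : z.re = Real.pi / 4 := by simp [hz]; ring
  have hzim : z.im = t := by rw [ht]; simp [hz]; ring
  have hs : Complex.sin z = (↑(Real.sqrt 2/2 * Real.cosh t) : ℂ)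
      + ↑(Real.sqrt 2/2 * Real.sinh t) * I := by
    rw [Complex.sin_eq, hzre, hzim, ← Complex.ofReal_sin, ← Complex.ofReal_cos,
      ← Complex.ofReal_cosh, ← Complex.ofReal_sinh, Real.sin_pi_div_four, Real.cos_pi_div_four]
    push_cast; ring
  have hsre : (Complex.sin z).re = Real.sqrt 2 / 2 * Real.cosh t := by
    rw [hs]; simp
  have hsim : (Complex.sin z).im = Real.sqrt 2 / 2 * Real.sinh t := by
    rw [hs]; simp [Complex.sinh_ofReal_re]
  rw [Complex.div_re, Complex.div_im, Complex.normSq_apply, hsre, hsim]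
  simp only [Complex.ofReal_re, Complex.ofReal_im]
  have h2 : Real.sqrt 2 * Real.sqrt 2 = 2 := Real.mul_self_sqrt (by norm_num)
  have hs2 : Real.sinh t ^ 2 = Real.cosh t ^ 2 - 1 := by
    have := Real.cosh_sq t; linarith
  have hc2 : Real.cosh (Real.pi * lam) = 2 * Real.cosh t ^ 2 - 1 := by
    rw [show Real.pi * lam = 2 * t by rw [ht]; ring, Real.cosh_two_mul]
    linarith [hs2]
  have hexp : Real.exp (-Real.pi * lam / 2) = Real.cosh t - Real.sinh t := by
    rw [Real.cosh_sub_sinh]; congr 1; rw [ht]; ring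
  have hN : Real.sqrt 2 / 2 * Real.cosh t * (Real.sqrt 2 / 2 * Real.cosh t)
      + Real.sqrt 2 / 2 * Real.sinh t * (Real.sqrt 2 / 2 * Real.sinh t)
      = Real.cosh (Real.pi * lam) / 2 := by
    rw [hc2]
    linear_combination ((Real.cosh t^2 + Real.sinh t^2)/4) * h2 + (1/2) * hs2
  rw [hN, hexp, hc2]
  have hcpos : (0:ℝ) < 2 * Real.cosh t ^ 2 - 1 := by
    nlinarith [Real.one_le_cosh t]
  field_simp
  linear_combination (0:ℝ) * Real.cosh_sub_sinh t
end
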